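/- In the commutative ring R = ℤ[x,y]/(2y), the intersection of the principal ideal generated by the class of y with the principal ideal generated by 2 is the zero ideal. -/

import Mathlib

open MvPolynomial

noncomputable abbrev stmt4R : Type :=
  MvPolynomial (Fin 2) ℤ ⧸ Ideal.span ({2 * X 1} : Set (MvPolynomial (Fin 2) ℤ))

noncomputable abbrev stmt4y : stmt4R :=
  Ideal.Quotient.mk _ (X 1 : MvPolynomial (Fin 2) ℤ)

/-- If `p * u ≡ a * v` modulo `a * p`, then `p ∣ a * v`, so primality of `p` forces `p ∣ v` and
hence `a * v ≡ 0`. -/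
theorem Ideal.Quotient.span_mk_inf_span_mk_eq_bot {A : Type*} [CommRing A] {a p : A}
    (hp : Prime p) (hpa : ¬p ∣ a) :
    span {mk (span {a * p}) p} ⊓ span {mk (span {a * p}) a} = ⊥ := by
  rw [eq_bot_iff]
  rintro z ⟨hzp, hza⟩
  obtain ⟨u', rfl⟩ := mem_span_singleton'.mp hzp
  obtain ⟨u, rfl⟩ := mk_surjective u'
  obtain ⟨v', hv⟩ := mem_span_singleton'.mp hza
  obtain ⟨v, rfl⟩ := mk_surjective v'
  simp only [← map_mul] at hv ⊢
  obtain ⟨c, hc⟩ := mem_span_singleton.mp (Ideal.Quotient.eq.mp hv)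
  have hpv : p ∣ v :=
    (hp.dvd_or_dvd ⟨u + a * c, by linear_combination hc⟩).resolve_left hpa
  obtain ⟨w, rfl⟩ := hpv
  rw [← hv, Ideal.mem_bot, eq_zero_iff_mem, mem_span_singleton]
  exact ⟨w, by ring⟩

theorem MvPolynomial.X_not_dvd_two {σ R : Type*} [CommSemiring R] [NeZero (2 : R)] (i : σ) :
    ¬(X i : MvPolynomial σ R) ∣ 2 := by
  intro h
  have h0 := map_dvd (constantCoeff (R := R) (σ := σ)) h
  rw [constantCoeff_X, map_ofNat, zero_dvd_iff] at h0
  exact two_ne_zero h0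

theorem stmt_4 :
    Ideal.span ({stmt4y} : Set stmt4R) ⊓ Ideal.span ({(2 : stmt4R)} : Set stmt4R) = ⊥ := by
  have h := Ideal.Quotient.span_mk_inf_span_mk_eq_bot X_prime
    (X_not_dvd_two (R := ℤ) (1 : Fin 2))
  rwa [map_ofNat] at h
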